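/- If n, m, a are nonnegative integers with n > m, n ≥ 2, and L_n + L_m = 3^a, then 0 < a·(log 3 / log α) − n < 7/α^{n−m}. -/

import Mathlib

/-- The Lucas sequence: `L 0 = 2`, `L 1 = 1`, `L (n+2) = L (n+1) + L n`. -/
def lucas : ℕ → ℕ
  | 0 => 2
  | 1 => 1
  | n + 2 => lucas (n + 1) + lucas n

/-- The golden ratio `α = (1 + √5)/2`. -/
noncomputable def α : ℝ := (1 + Real.sqrt 5) / 2

/-!
Binet's formula `L k = φ ^ k + ψ ^ k` with `|ψ| < 1` shows that `3 ^ a = L n + L m` lies strictly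
between `φ ^ n` and `φ ^ n + 3 φ ^ m = φ ^ n (1 + 3 / φ ^ (n - m))`. Taking logarithms,
`0 < a log 3 - n log φ ≤ log (1 + 3 / φ ^ (n - m)) ≤ 3 / φ ^ (n - m)`, and dividing by
`log φ > 3 / 7` gives the bounds.
-/

open Real goldenRatio

theorem alpha_eq_goldenRatio : α = φ := rfl

theorem abs_goldenConj_lt_one : |ψ| < 1 :=
  abs_lt.2 ⟨neg_one_lt_goldenConj, goldenConj_neg.trans one_pos⟩

theorem three_div_seven_lt_log_goldenRatio : 3 / 7 < log φ := by
  have hφ : (1.6 : ℝ) < φ := by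
    have : (2.2 : ℝ) < √5 := lt_sqrt (by norm_num) |>.2 (by norm_num)
    rw [goldenRatio]
    linarith
  have hφ7 : φ ^ 7 = 13 * φ + 8 := by
    linear_combination (φ ^ 5 + φ ^ 4 + 2 * φ ^ 3 + 3 * φ ^ 2 + 5 * φ + 8) * goldenRatio_sq
  have hexp3 : exp 3 < 21 := by
    calc exp 3 = exp 1 ^ 3 := by rw [← exp_nat_mul]; norm_num
      _ < 2.7182818286 ^ 3 := by gcongr; exact exp_one_lt_d9
      _ < 21 := by norm_num
  rw [lt_log_iff_exp_lt goldenRatio_pos,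
    ← pow_lt_pow_iff_left₀ (exp_pos _).le goldenRatio_pos.le (by norm_num : 7 ≠ 0),
    ← exp_nat_mul]
  norm_num
  linarith

theorem lucas_eq_goldenRatio_pow_add_goldenConj_pow (k : ℕ) :
    (lucas k : ℝ) = φ ^ k + ψ ^ k := by
  induction k using Nat.twoStepInduction with
  | zero => norm_num [lucas]
  | one => norm_num [lucas, goldenRatio_add_goldenConj]
  | more j ih₁ ih₂ =>
    rw [lucas, Nat.cast_add, ih₁, ih₂]
    linear_combination (-φ ^ j) * goldenRatio_sq + (-ψ ^ j) * goldenConj_sq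

theorem one_le_lucas (k : ℕ) : 1 ≤ lucas k := by
  induction k using Nat.twoStepInduction with
  | zero => simp [lucas]
  | one => simp [lucas]
  | more j ih₁ _ => rw [lucas]; omega

theorem goldenRatio_pow_lt_lucas_add_lucas {m n : ℕ} (hmn : m < n) :
    φ ^ n < lucas n + lucas m := by
  have hψn : -1 < ψ ^ n := by
    have := abs_pow ψ n ▸ pow_lt_one₀ (abs_nonneg ψ) abs_goldenConj_lt_one (by omega)
    exact (abs_lt.1 this).1
  have hLm : (1 : ℝ) ≤ lucas m := by exact_mod_cast one_le_lucas m
  rw [lucas_eq_goldenRatio_pow_add_goldenConj_pow n]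
  linarith

theorem lucas_add_lucas_le (m n : ℕ) : (lucas n + lucas m : ℝ) ≤ φ ^ n + 3 * φ ^ m := by
  have hψ (k : ℕ) : ψ ^ k ≤ 1 :=
    (abs_le.1 (abs_pow ψ k ▸ pow_le_one₀ (abs_nonneg ψ) abs_goldenConj_lt_one.le)).2
  have hφm : 1 ≤ φ ^ m := one_le_pow₀ one_lt_goldenRatio.le
  rw [lucas_eq_goldenRatio_pow_add_goldenConj_pow, lucas_eq_goldenRatio_pow_add_goldenConj_pow]
  linarith [hψ n, hψ m]

theorem goldenRatio_pow_add_three_mul_pow {m n : ℕ} (hmn : m ≤ n) :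
    φ ^ n + 3 * φ ^ m = φ ^ n * (1 + 3 / φ ^ (n - m)) := by
  have hsplit : φ ^ n = φ ^ m * φ ^ (n - m) := by rw [← pow_add, Nat.add_sub_cancel' hmn]
  have : φ ^ (n - m) ≠ 0 := pow_ne_zero _ goldenRatio_ne_zero
  rw [hsplit]
  field_simp

theorem Real.log_le_log_add_of_le_mul_one_add {x y ε : ℝ} (hx : 0 < x) (hy : 0 < y)
    (h : y ≤ x * (1 + ε)) : log y ≤ log x + ε := by
  have hdiv : y / x - 1 ≤ ε := by
    rw [sub_le_iff_le_add', div_le_iff₀ hx]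
    linarith
  linarith [log_div hy.ne' hx.ne', log_le_sub_one_of_pos (div_pos hy hx)]

theorem homogeneous_form_bounds_general (n m a : ℕ) (hnm : m < n)
    (h : lucas n + lucas m = 3 ^ a) :
    0 < (a : ℝ) * (Real.log 3 / Real.log α) - (n : ℝ) ∧
    (a : ℝ) * (Real.log 3 / Real.log α) - (n : ℝ) < 7 / α ^ (n - m) := by
  rw [alpha_eq_goldenRatio]
  have h3a : (lucas n + lucas m : ℝ) = 3 ^ a := by exact_mod_cast h
  have hφn : 0 < φ ^ n := pow_pos goldenRatio_pos n
  have hlow := log_lt_log hφn (h3a ▸ goldenRatio_pow_lt_lucas_add_lucas hnm)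
  have hup := log_le_log_add_of_le_mul_one_add hφn (by positivity) <|
    h3a ▸ goldenRatio_pow_add_three_mul_pow hnm.le ▸ lucas_add_lucas_le m n
  rw [log_pow, log_pow] at hlow hup
  have hlogφ := three_div_seven_lt_log_goldenRatio
  have hφk : 0 < φ ^ (n - m) := pow_pos goldenRatio_pos _
  have hform : (a : ℝ) * (log 3 / log φ) - n = (a * log 3 - n * log φ) / log φ := by
    field_simp
  rw [hform]
  refine ⟨div_pos (by linarith) (by linarith), ?_⟩
  rw [div_lt_iff₀ (by linarith), div_mul_eq_mul_div, lt_div_iff₀ hφk]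
  calc (a * log 3 - n * log φ) * φ ^ (n - m) ≤ 3 / φ ^ (n - m) * φ ^ (n - m) := by
        gcongr; linarith
    _ = 3 := div_mul_cancel₀ _ hφk.ne'
    _ < 7 * log φ := by linarith

/-- If `n > m`, `n ≥ 2` and `L n + L m = 3^a`, then
`0 < a·(log 3 / log α) − n < 7/α^(n−m)`. -/
theorem homogeneous_form_bounds (n m a : ℕ) (hnm : m < n) (hn : 2 ≤ n)
    (h : lucas n + lucas m = 3 ^ a) :
    0 < (a : ℝ) * (Real.log 3 / Real.log α) - (n : ℝ) ∧
    (a : ℝ) * (Real.log 3 / Real.log α) - (n : ℝ) < 7 / α ^ (n - m) :=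
  homogeneous_form_bounds_general n m a hnm h
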